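/- Let V = (Fin K → ℂ) × (Fin K → ℂ) with the symplectic form ω((x,ξ),(x',ξ')) = Σᵢ ξ'ᵢxᵢ − Σᵢ ξᵢx'ᵢ and entrywise conjugation. Let W ⊆ V be a coisotropic subspace invariant under conjugation (the complexification of a real coisotropic subspace), and let L be a Lagrangian subspace such that Im ω(X̄, X) > 0 for every nonzero X ∈ L. Then: (a) L ∩ W° = {0}; and (b) for every x ∈ (L ∩ W) + W° with x ∉ W°, Im ω(x̄, x) > 0. (Hence the symplectic reduction t_W(L) ⊆ W/W° again lies in the Siegel domain of the reduced symplectic space: the symplectic reduction by a real coisotropic subspace is analytic on S₊ and maps S₊ into S₊.) -/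
import Mathlib


open Matrix

noncomputable section

/-- `V = ℂ^K × (ℂ^K)^*`. -/
abbrev VK (K : ℕ) : Type := (Fin K → ℂ) × (Fin K → ℂ)

/-- The canonical symplectic form `ω((x,ξ),(x',ξ')) = Σᵢ ξ'ᵢ xᵢ − Σᵢ ξᵢ x'ᵢ`. -/
def omegaV {K : ℕ} : VK K →ₗ[ℂ] VK K →ₗ[ℂ] ℂ :=
  LinearMap.mk₂ ℂ (fun v w => ∑ i, w.2 i * v.1 i - ∑ i, v.2 i * w.1 i)
    (by
      intro m₁ m₂ n
      simp only [Prod.fst_add, Prod.snd_add, Pi.add_apply, mul_add, add_mul,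
        Finset.sum_add_distrib]
      ring)
    (by
      intro c m n
      simp only [Prod.smul_fst, Prod.smul_snd, Pi.smul_apply, smul_eq_mul, mul_sub,
        Finset.mul_sum, mul_comm, mul_left_comm, mul_assoc])
    (by
      intro m n₁ n₂
      simp only [Prod.fst_add, Prod.snd_add, Pi.add_apply, mul_add, add_mul,
        Finset.sum_add_distrib]
      ring)
    (by
      intro m c n
      simp only [Prod.smul_fst, Prod.smul_snd, Pi.smul_apply, smul_eq_mul, mul_sub,
        Finset.mul_sum, mul_comm, mul_left_comm, mul_assoc])

/-- Entrywise complex conjugation on `V`. -/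
def conjV {K : ℕ} (v : VK K) : VK K :=
  (fun i => starRingEnd ℂ (v.1 i), fun i => starRingEnd ℂ (v.2 i))

/-- The `ω`-orthogonal of a subspace `U`. -/
def sympOrth {V : Type*} [AddCommGroup V] [Module ℂ V]
    (ω : V →ₗ[ℂ] V →ₗ[ℂ] ℂ) (U : Submodule ℂ V) : Submodule ℂ V where
  carrier := {v | ∀ u ∈ U, ω v u = 0}
  add_mem' := by
    intro a b ha hb u hu
    simp [map_add, LinearMap.add_apply, ha u hu, hb u hu]
  zero_mem' := by
    intro u hu
    simp
  smul_mem' := by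
    intro c a ha u hu
    simp [_root_.map_smul, LinearMap.smul_apply, ha u hu]

lemma omegaV_apply {K : ℕ} (v w : VK K) :
    omegaV v w = ∑ i, w.2 i * v.1 i - ∑ i, v.2 i * w.1 i := rfl

lemma omegaV_antisymm {K : ℕ} (v w : VK K) : omegaV v w = - omegaV w v := by
  simp only [omegaV_apply]; ring

lemma conjV_conjV {K : ℕ} (v : VK K) : conjV (conjV v) = v := by
  simp [conjV]

lemma conjV_add {K : ℕ} (v w : VK K) : conjV (v + w) = conjV v + conjV w := by
  refine Prod.ext ?_ ?_ <;> funext i <;> simp [conjV]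

lemma omegaV_conj {K : ℕ} (v w : VK K) :
    omegaV (conjV v) (conjV w) = starRingEnd ℂ (omegaV v w) := by
  simp [omegaV_apply, conjV, map_sum]

lemma sympOrth_conj {K : ℕ} (W : Submodule ℂ (VK K)) (hWconj : ∀ x ∈ W, conjV x ∈ W)
    (v : VK K) (hv : v ∈ sympOrth omegaV W) : conjV v ∈ sympOrth omegaV W := by
  intro u hu
  have h1 : omegaV (conjV v) (conjV (conjV u)) = 0 := by
    rw [omegaV_conj, hv _ (hWconj u hu), map_zero]
  rwa [conjV_conjV] at h1

/-- If `W` is a coisotropic subspace invariant under conjugation (the complexification of a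
real coisotropic subspace) and `L` is a Lagrangian subspace in the Siegel domain
(`Im ω(X̄,X) > 0` on `L ∖ {0}`), then (a) `L ∩ W° = 0`, and (b) every
`x ∈ (L ∩ W) + W°` with `x ∉ W°` satisfies `Im ω(x̄,x) > 0`: the symplectic reduction maps
the Siegel domain into the Siegel domain of `W/W°`. -/
theorem statement_11 {K : ℕ} (W L : Submodule ℂ (VK K))
    (hWco : sympOrth omegaV W ≤ W)
    (hWconj : ∀ x ∈ W, conjV x ∈ W)
    (hLlag : sympOrth omegaV L = L)
    (hSiegel : ∀ X ∈ L, X ≠ 0 → 0 < (omegaV (conjV X) X).im) :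
    L ⊓ sympOrth omegaV W = ⊥ ∧
      ∀ x ∈ (L ⊓ W) ⊔ sympOrth omegaV W, x ∉ sympOrth omegaV W →
        0 < (omegaV (conjV x) x).im := by
  have mem_orth : ∀ (U : Submodule ℂ (VK K)) (v : VK K),
      v ∈ sympOrth omegaV U ↔ ∀ u ∈ U, omegaV v u = 0 := fun _ _ => Iff.rfl
  constructor
  · ext v
    simp only [Submodule.mem_inf, Submodule.mem_bot]
    constructor
    · rintro ⟨hvL, hvW⟩
      by_contra hv
      have hpos := hSiegel v hvL hv
      have hconj : conjV v ∈ sympOrth omegaV W := sympOrth_conj W hWconj v hvW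
      have : omegaV (conjV v) v = 0 := hconj v (hWco hvW)
      rw [this] at hpos; simp at hpos
    · rintro rfl
      exact ⟨L.zero_mem, (sympOrth omegaV W).zero_mem⟩
  · intro x hx hxn
    obtain ⟨l, hl, w, hw, rfl⟩ := Submodule.mem_sup.mp hx
    obtain ⟨hlL, hlW⟩ := Submodule.mem_inf.mp hl
    have hl0 : l ≠ 0 := by
      rintro rfl
      exact hxn (by simpa using hw)
    have hcw : conjV w ∈ sympOrth omegaV W := sympOrth_conj W hWconj w hw
    have e1 : omegaV (conjV w) l = 0 := hcw l hlW
    have e2 : omegaV (conjV w) w = 0 := hcw w (hWco hw)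
    have e3 : omegaV (conjV l) w = 0 := by
      rw [omegaV_antisymm, hw (conjV l) (hWconj l hlW), neg_zero]
    have key : omegaV (conjV (l + w)) (l + w) = omegaV (conjV l) l := by
      simp only [conjV_add, map_add, LinearMap.add_apply, e1, e2, e3]
      ring
    rw [key]
    exact hSiegel l hlL hl0
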